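/- Let (λ_k)_{k∈ℤ} be a sequence of distinct complex numbers, α ≥ 0, and let f̂ = [f̂_{k,l}] satisfy Σ_{k,l} (1+k²+l²)^α |f̂_{k,l}(0)|² < ∞. Define f̂_{k,l}(t) = f̂_{k,l}(0)·exp((conj(λ_k)λ_l − |λ_k|²/2 − |λ_l|²/2)t) for t ≥ 0. Then the function t ↦ Σ_{k,l} (1+k²+l²)^α |f̂_{k,l}(t)|² is nonincreasing in t, and its limit as t → ∞ equals Σ_{k∈ℤ} (1+2k²)^α |f̂_{k,k}(0)|². -/

import Mathlib

/-!
Each Fourier mode evolves by a scalar exponential whose rate has real part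
`-‖λ_k - λ_l‖² / 2`, so `|f̂_{k,l}(t)|² = |f̂_{k,l}(0)|² e^{-‖λ_k - λ_l‖² t}`. Every weighted term
is therefore nonincreasing, and by dominated convergence the sum tends to the sum of the modes
with zero rate; as the `λ_k` are distinct these are exactly the diagonal ones.
-/

open scoped ComplexConjugate
open Filter

/-- The Sobolev α-weight on ℤ². -/
noncomputable def sobolevWeight (α : ℝ) (k l : ℤ) : ℝ := (1 + (k:ℝ)^2 + (l:ℝ)^2) ^ α

open Topology

lemma sobolevWeight_nonneg (α : ℝ) (k l : ℤ) : 0 ≤ sobolevWeight α k l :=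
  Real.rpow_nonneg (by positivity) α

lemma sobolevWeight_self (α : ℝ) (k : ℤ) : sobolevWeight α k k = (1 + 2 * (k : ℝ) ^ 2) ^ α := by
  unfold sobolevWeight
  ring_nf

lemma re_conj_mul_sub_half_norm_sq (a b : ℂ) :
    (conj a * b - (‖a‖ ^ 2 / 2 : ℝ) - (‖b‖ ^ 2 / 2 : ℝ)).re = -(‖a - b‖ ^ 2 / 2) := by
  have h := norm_sub_sq_real a b
  rw [Complex.inner, mul_comm b] at h
  simp only [Complex.sub_re, Complex.ofReal_re]
  linarith

lemma norm_exp_conj_mul_sub_half_norm_sq_sq (a b : ℂ) (t : ℝ) :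
    ‖Complex.exp ((conj a * b - (‖a‖ ^ 2 / 2 : ℝ) - (‖b‖ ^ 2 / 2 : ℝ)) * t)‖ ^ 2
      = Real.exp (-(‖a - b‖ ^ 2 * t)) := by
  rw [Complex.norm_exp, Complex.re_mul_ofReal, re_conj_mul_sub_half_norm_sq, sq,
    ← Real.exp_add]
  ring_nf

section ExpDecay

variable {ι : Type*} {w c : ι → ℝ}

theorem antitoneOn_tsum_mul_exp_neg (hw : ∀ i, 0 ≤ w i) (hsum : Summable w)
    (hc : ∀ i, 0 ≤ c i) :
    AntitoneOn (fun t => ∑' i, w i * Real.exp (-(c i * t))) (Set.Ici 0) := by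
  have hle : ∀ {s t : ℝ}, s ≤ t → ∀ i,
      w i * Real.exp (-(c i * t)) ≤ w i * Real.exp (-(c i * s)) :=
    fun hst i => mul_le_mul_of_nonneg_left
      (Real.exp_le_exp.2 (neg_le_neg (mul_le_mul_of_nonneg_left hst (hc i)))) (hw i)
  have hsummable : ∀ {t : ℝ}, 0 ≤ t → Summable fun i => w i * Real.exp (-(c i * t)) := by
    intro t ht
    refine hsum.of_nonneg_of_le (fun i => mul_nonneg (hw i) (Real.exp_pos _).le) fun i => ?_
    simpa using hle ht i
  intro s hs t ht hst
  exact Summable.tsum_le_tsum (hle hst) (hsummable (le_trans hs hst)) (hsummable hs)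

theorem tendsto_tsum_mul_exp_neg (hsum : Summable w) (hc : ∀ i, 0 ≤ c i) :
    Tendsto (fun t => ∑' i, w i * Real.exp (-(c i * t))) atTop
      (𝓝 (∑' i, if c i = 0 then w i else 0)) := by
  refine tendsto_tsum_of_dominated_convergence hsum.abs (fun i => ?_) ?_
  · split_ifs with h
    · simp [h]
    · have hdecay : Tendsto (fun t => Real.exp (-(c i * t))) atTop (𝓝 0) :=
        Real.tendsto_exp_neg_atTop_nhds_zero.comp
          (tendsto_id.const_mul_atTop (lt_of_le_of_ne (hc i) (Ne.symm h)))
      simpa using hdecay.const_mul (w i)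
  · filter_upwards [eventually_ge_atTop 0] with t ht i
    rw [norm_mul, Real.norm_eq_abs, Real.norm_of_nonneg (Real.exp_pos _).le]
    exact mul_le_of_le_one_right (abs_nonneg _)
      (Real.exp_le_one_iff.2 (neg_nonpos.2 (mul_nonneg (hc i) ht)))

end ExpDecay

theorem tsum_ite_norm_sub_sq_eq_zero_eq_tsum_diag {ι E M : Type*} [NormedAddCommGroup E]
    [AddCommMonoid M] [TopologicalSpace M] {lam : ι → E} (hlam : Function.Injective lam)
    (g : ι × ι → M) :
    ∑' kl : ι × ι, (if ‖lam kl.1 - lam kl.2‖ ^ 2 = 0 then g kl else 0) = ∑' k, g (k, k) := by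
  have hdiag : Function.Injective fun k : ι => (k, k) := fun _ _ h => (Prod.ext_iff.1 h).1
  refine (hdiag.tsum_eq fun kl hkl => ⟨kl.1, ?_⟩).symm.trans (by simp)
  have heq : lam kl.1 = lam kl.2 := by
    by_contra h
    exact hkl (if_neg (by simpa [sub_eq_zero] using h))
  exact Prod.ext rfl (hlam heq)

theorem diagonal_lindblad_decay_general (α : ℝ) (lam : ℤ → ℂ)
    (hlam : Function.Injective lam) (f0 : ℤ → ℤ → ℂ)
    (hf0 : Summable fun kl : ℤ × ℤ => sobolevWeight α kl.1 kl.2 * ‖f0 kl.1 kl.2‖ ^ 2)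
    (F : ℝ → ℤ → ℤ → ℂ)
    (hF : ∀ (t : ℝ) (k l : ℤ), F t k l =
      f0 k l * Complex.exp ((conj (lam k) * lam l
        - (‖lam k‖ ^ 2 / 2 : ℝ) - (‖lam l‖ ^ 2 / 2 : ℝ)) * t)) :
    AntitoneOn (fun t : ℝ =>
        ∑' kl : ℤ × ℤ, sobolevWeight α kl.1 kl.2 * ‖F t kl.1 kl.2‖ ^ 2) (Set.Ici 0) ∧
    Tendsto (fun t : ℝ =>
        ∑' kl : ℤ × ℤ, sobolevWeight α kl.1 kl.2 * ‖F t kl.1 kl.2‖ ^ 2) atTop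
      (nhds (∑' k : ℤ, (1 + 2 * (k:ℝ) ^ 2) ^ α * ‖f0 k k‖ ^ 2)) := by
  have hmodes : (fun t : ℝ => ∑' kl : ℤ × ℤ, sobolevWeight α kl.1 kl.2 * ‖F t kl.1 kl.2‖ ^ 2)
      = fun t => ∑' kl : ℤ × ℤ, sobolevWeight α kl.1 kl.2 * ‖f0 kl.1 kl.2‖ ^ 2
          * Real.exp (-(‖lam kl.1 - lam kl.2‖ ^ 2 * t)) := by
    funext t
    refine tsum_congr fun kl => ?_
    rw [hF, norm_mul, mul_pow, norm_exp_conj_mul_sub_half_norm_sq_sq, mul_assoc]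
  have hc : ∀ kl : ℤ × ℤ, 0 ≤ ‖lam kl.1 - lam kl.2‖ ^ 2 := fun _ => sq_nonneg _
  rw [hmodes]
  refine ⟨antitoneOn_tsum_mul_exp_neg
    (fun kl => mul_nonneg (sobolevWeight_nonneg α _ _) (sq_nonneg _)) hf0 hc, ?_⟩
  convert tendsto_tsum_mul_exp_neg hf0 hc using 2
  rw [tsum_ite_norm_sub_sq_eq_zero_eq_tsum_diag hlam]
  simp only [sobolevWeight_self]

theorem diagonal_lindblad_decay (α : ℝ) (hα : 0 ≤ α) (lam : ℤ → ℂ)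
    (hlam : Function.Injective lam) (f0 : ℤ → ℤ → ℂ)
    (hf0 : Summable fun kl : ℤ × ℤ => sobolevWeight α kl.1 kl.2 * ‖f0 kl.1 kl.2‖ ^ 2)
    (F : ℝ → ℤ → ℤ → ℂ)
    (hF : ∀ (t : ℝ) (k l : ℤ), F t k l =
      f0 k l * Complex.exp ((conj (lam k) * lam l
        - (‖lam k‖ ^ 2 / 2 : ℝ) - (‖lam l‖ ^ 2 / 2 : ℝ)) * t)) :
    AntitoneOn (fun t : ℝ =>
        ∑' kl : ℤ × ℤ, sobolevWeight α kl.1 kl.2 * ‖F t kl.1 kl.2‖ ^ 2) (Set.Ici 0) ∧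
    Tendsto (fun t : ℝ =>
        ∑' kl : ℤ × ℤ, sobolevWeight α kl.1 kl.2 * ‖F t kl.1 kl.2‖ ^ 2) atTop
      (nhds (∑' k : ℤ, (1 + 2 * (k:ℝ) ^ 2) ^ α * ‖f0 k k‖ ^ 2)) :=
  diagonal_lindblad_decay_general α lam hlam f0 hf0 F hF
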